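/- Let d ≥ 1, let 𝓗 be a finite nonempty index set, and for each k ∈ 𝓗 let ℓ_k : ℝ^d → ℝ be L-smooth for some L > 0. Set ℓ_𝓗 = (1/|𝓗|)∑_{k∈𝓗} ℓ_k and assume (1/|𝓗|)∑_{k∈𝓗}‖∇ℓ_k(w') − ∇ℓ_𝓗(w')‖² ≤ G² for all w' ∈ ℝ^d. Let γ > 0 and H ≥ 1 satisfy L²γ²H(H−1) ≤ 1/2, fix w ∈ ℝ^d, define for each k ∈ 𝓗 the local sequence v_{k,0} = w, v_{k,h+1} = v_{k,h} − γ∇ℓ_k(v_{k,h}), and set Δ = (1/|𝓗|)∑_{k∈𝓗}(v_{k,H} − w) = −(γ/|𝓗|)∑_{k∈𝓗}∑_{h=0}^{H−1}∇ℓ_k(v_{k,h}). Then ‖Δ + Hγ∇ℓ_𝓗(w)‖² ≤ 4L²γ⁴H³(H−1)(G² + ‖∇ℓ_𝓗(w)‖²). -/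

import Mathlib

open Finset

/-!
Unrolling the recursion, `v_{k,h} - w = -γ ∑_{j<h} ∇ℓ_k(v_{k,j})`. Cauchy–Schwarz and smoothness at
`w` bound the drift `S_k = ∑_{h<H} ‖v_{k,h} - w‖²` by `L²γ²H(H-1) S_k + γ²H²(H-1)‖∇ℓ_k(w)‖²`, and the
step-size condition absorbs the first term, so `S_k ≤ 2γ²H²(H-1)‖∇ℓ_k(w)‖²`. The bias of client `k` is
`γ ∑_{h<H} (∇ℓ_k(w) - ∇ℓ_k(v_{k,h}))`, whose square is at most `γ²HL² S_k`. Averaging over clients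
(Jensen) and splitting the mean of `‖∇ℓ_k(w)‖²` into the heterogeneity at `w` plus `‖∇ℓ_𝓗(w)‖²` gives
the bound with the constant `2`, a fortiori with `4`.
-/

lemma sq_norm_sum_le_card_mul {E ι : Type*} [SeminormedAddCommGroup E] (s : Finset ι)
    (f : ι → E) : ‖∑ i ∈ s, f i‖ ^ 2 ≤ #s * ∑ i ∈ s, ‖f i‖ ^ 2 :=
  (pow_le_pow_left₀ (norm_nonneg _) (norm_sum_le _ _) 2).trans sq_sum_le_card_mul_sum_sq

lemma sum_range_natCast (n : ℕ) : ∑ i ∈ range n, (i : ℝ) = n * (n - 1) / 2 := by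
  induction n with
  | zero => simp
  | succ n ih =>
    rw [sum_range_succ, ih]
    push_cast
    ring

lemma natCast_mul_natCast_sub_one_nonneg (n : ℕ) : 0 ≤ (n : ℝ) * (n - 1) := by
  have : 0 ≤ ∑ i ∈ range n, (i : ℝ) := sum_nonneg fun i _ => i.cast_nonneg
  linarith [sum_range_natCast n]

lemma sq_norm_sub_le_sq_mul {E F : Type*} [SeminormedAddCommGroup E]
    [SeminormedAddCommGroup F] {g : E → F} {u w : E} {L : ℝ} (hg : ‖g u - g w‖ ≤ L * ‖u - w‖) :
    ‖g u - g w‖ ^ 2 ≤ L ^ 2 * ‖u - w‖ ^ 2 := by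
  rw [← mul_pow]
  exact pow_le_pow_left₀ (norm_nonneg _) hg 2

lemma sq_norm_le_of_norm_sub_le {E F : Type*} [SeminormedAddCommGroup E]
    [SeminormedAddCommGroup F] {g : E → F} {u w : E} {L : ℝ} (hg : ‖g u - g w‖ ≤ L * ‖u - w‖) :
    ‖g u‖ ^ 2 ≤ 2 * L ^ 2 * ‖u - w‖ ^ 2 + 2 * ‖g w‖ ^ 2 := by
  have htri : ‖g u‖ ≤ ‖g u - g w‖ + ‖g w‖ := norm_le_norm_sub_add _ _
  calc ‖g u‖ ^ 2 ≤ (‖g u - g w‖ + ‖g w‖) ^ 2 := pow_le_pow_left₀ (norm_nonneg _) htri 2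
    _ ≤ 2 * (‖g u - g w‖ ^ 2 + ‖g w‖ ^ 2) := add_sq_le
    _ ≤ 2 * L ^ 2 * ‖u - w‖ ^ 2 + 2 * ‖g w‖ ^ 2 := by linarith [sq_norm_sub_le_sq_mul hg]

section GradientSteps

variable {E : Type*} [SeminormedAddCommGroup E] [NormedSpace ℝ E]
  {g : E → E} {γ L : ℝ} {w : E} {v : ℕ → E}

lemma iterate_sub_eq_neg_smul_sum (hv0 : v 0 = w)
    (hrec : ∀ h, v (h + 1) = v h - γ • g (v h)) (h : ℕ) :
    v h - w = -(γ • ∑ j ∈ range h, g (v j)) := by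
  induction h with
  | zero => simp [hv0]
  | succ n ih =>
    rw [hrec, sum_range_succ, smul_add, neg_add, ← ih]
    abel

lemma sum_sq_norm_iterate_sub_le (hv0 : v 0 = w) (hrec : ∀ h, v (h + 1) = v h - γ • g (v h))
    (hg : ∀ u, ‖g u - g w‖ ≤ L * ‖u - w‖) {H : ℕ}
    (hstep : L ^ 2 * γ ^ 2 * H * (H - 1) ≤ 1 / 2) :
    ∑ h ∈ range H, ‖v h - w‖ ^ 2 ≤ 2 * γ ^ 2 * H ^ 2 * (H - 1) * ‖g w‖ ^ 2 := by
  set S := ∑ h ∈ range H, ‖v h - w‖ ^ 2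
  set A := 2 * γ ^ 2 * L ^ 2 * S + 2 * γ ^ 2 * H * ‖g w‖ ^ 2
  have hS : 0 ≤ S := sum_nonneg fun _ _ => sq_nonneg _
  have hpoint : ∀ h ∈ range H, ‖v h - w‖ ^ 2 ≤ h * A := by
    intro h hh
    have hhH : h ≤ H := (mem_range.mp hh).le
    have hpart : ∑ j ∈ range h, ‖v j - w‖ ^ 2 ≤ S :=
      sum_le_sum_of_subset_of_nonneg (range_subset_range.mpr hhH) fun _ _ _ => sq_nonneg _
    calc ‖v h - w‖ ^ 2 = γ ^ 2 * ‖∑ j ∈ range h, g (v j)‖ ^ 2 := by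
          rw [iterate_sub_eq_neg_smul_sum hv0 hrec, norm_neg, norm_smul, mul_pow,
            Real.norm_eq_abs, sq_abs]
      _ ≤ γ ^ 2 * (h * ∑ j ∈ range h, ‖g (v j)‖ ^ 2) := by
          gcongr
          simpa using sq_norm_sum_le_card_mul (range h) fun j => g (v j)
      _ ≤ γ ^ 2 * (h * ∑ j ∈ range h, (2 * L ^ 2 * ‖v j - w‖ ^ 2 + 2 * ‖g w‖ ^ 2)) := by
          gcongr with j
          exact sq_norm_le_of_norm_sub_le (hg _)
      _ = γ ^ 2 * (h * (2 * L ^ 2 * ∑ j ∈ range h, ‖v j - w‖ ^ 2 + 2 * h * ‖g w‖ ^ 2)) := by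
          rw [sum_add_distrib, ← mul_sum, sum_const, card_range, nsmul_eq_mul]
          ring
      _ ≤ γ ^ 2 * (h * (2 * L ^ 2 * S + 2 * H * ‖g w‖ ^ 2)) := by gcongr
      _ = h * A := by ring
  have hself : S ≤ L ^ 2 * γ ^ 2 * H * (H - 1) * S + γ ^ 2 * H ^ 2 * (H - 1) * ‖g w‖ ^ 2 :=
    calc S ≤ ∑ h ∈ range H, h * A := sum_le_sum hpoint
      _ = A * (H * (H - 1) / 2) := by rw [← sum_mul, sum_range_natCast, mul_comm]
      _ = _ := by ring
  nlinarith [mul_le_mul_of_nonneg_right hstep hS]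

lemma sq_norm_iterate_sub_add_le (hv0 : v 0 = w) (hrec : ∀ h, v (h + 1) = v h - γ • g (v h))
    (hg : ∀ u, ‖g u - g w‖ ≤ L * ‖u - w‖) {H : ℕ}
    (hstep : L ^ 2 * γ ^ 2 * H * (H - 1) ≤ 1 / 2) :
    ‖(v H - w) + ((H : ℝ) * γ) • g w‖ ^ 2
      ≤ 2 * L ^ 2 * γ ^ 4 * H ^ 3 * (H - 1) * ‖g w‖ ^ 2 := by
  have hbias : (v H - w) + ((H : ℝ) * γ) • g w = γ • ∑ h ∈ range H, (g w - g (v h)) := by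
    rw [iterate_sub_eq_neg_smul_sum hv0 hrec, sum_sub_distrib, sum_const, card_range,
      ← Nat.cast_smul_eq_nsmul ℝ, mul_comm, mul_smul]
    module
  calc ‖(v H - w) + ((H : ℝ) * γ) • g w‖ ^ 2
      = γ ^ 2 * ‖∑ h ∈ range H, (g w - g (v h))‖ ^ 2 := by
        rw [hbias, norm_smul, mul_pow, Real.norm_eq_abs, sq_abs]
    _ ≤ γ ^ 2 * (H * ∑ h ∈ range H, ‖g w - g (v h)‖ ^ 2) := by
        gcongr
        simpa using sq_norm_sum_le_card_mul (range H) fun h => g w - g (v h)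
    _ ≤ γ ^ 2 * (H * ∑ h ∈ range H, L ^ 2 * ‖v h - w‖ ^ 2) := by
        gcongr with h
        rw [norm_sub_rev]
        exact sq_norm_sub_le_sq_mul (hg _)
    _ = γ ^ 2 * H * L ^ 2 * ∑ h ∈ range H, ‖v h - w‖ ^ 2 := by rw [← mul_sum]; ring
    _ ≤ γ ^ 2 * H * L ^ 2 * (2 * γ ^ 2 * H ^ 2 * (H - 1) * ‖g w‖ ^ 2) := by
        gcongr
        exact sum_sq_norm_iterate_sub_le hv0 hrec hg hstep
    _ = _ := by ring

end GradientSteps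

section Average

variable {E ι : Type*} [NormedAddCommGroup E] [InnerProductSpace ℝ E] [Fintype ι]

lemma sq_norm_average_le (x : ι → E) :
    ‖(Fintype.card ι : ℝ)⁻¹ • ∑ k, x k‖ ^ 2 ≤ (Fintype.card ι : ℝ)⁻¹ * ∑ k, ‖x k‖ ^ 2 := by
  set c := (Fintype.card ι : ℝ)
  rw [norm_smul, mul_pow, Real.norm_eq_abs, sq_abs]
  calc c⁻¹ ^ 2 * ‖∑ k, x k‖ ^ 2 ≤ c⁻¹ ^ 2 * (c * ∑ k, ‖x k‖ ^ 2) := by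
        gcongr
        exact sq_norm_sum_le_card_mul univ x
    _ = c⁻¹ * ∑ k, ‖x k‖ ^ 2 := by
        rcases eq_or_ne c 0 with hc | hc
        · simp [hc]
        · field_simp

lemma average_sq_norm_eq [Nonempty ι] (x : ι → E) :
    (Fintype.card ι : ℝ)⁻¹ * ∑ k, ‖x k‖ ^ 2
      = (Fintype.card ι : ℝ)⁻¹ * ∑ k, ‖x k - (Fintype.card ι : ℝ)⁻¹ • ∑ j, x j‖ ^ 2
        + ‖(Fintype.card ι : ℝ)⁻¹ • ∑ j, x j‖ ^ 2 := by
  set c := (Fintype.card ι : ℝ)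
  set m := c⁻¹ • ∑ j, x j
  have hc : c ≠ 0 := by positivity
  have hcentered : ∑ k, (x k - m) = 0 := by
    rw [sum_sub_distrib, sum_const, card_univ, ← Nat.cast_smul_eq_nsmul ℝ, smul_smul,
      mul_inv_cancel₀ hc, one_smul, sub_self]
  have hexpand : ∀ k, ‖x k‖ ^ 2 = ‖x k - m‖ ^ 2 + 2 * inner ℝ (x k - m) m + ‖m‖ ^ 2 := by
    intro k
    simpa using norm_add_sq_real (x k - m) m
  simp_rw [hexpand, sum_add_distrib, ← mul_sum, ← sum_inner, hcentered, inner_zero_left,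
    sum_const, card_univ, nsmul_eq_mul]
  field_simp
  ring

end Average

section Gradient

variable {F ι : Type*} [NormedAddCommGroup F] [InnerProductSpace ℝ F] [CompleteSpace F]
  {x : F}

lemma gradient_const_mul {f : F → ℝ} (hf : DifferentiableAt ℝ f x) (c : ℝ) :
    gradient (fun y => c * f y) x = c • gradient f x := by
  rw [gradient, fderiv_const_mul hf, map_smul, gradient]

lemma gradient_fun_sum {s : Finset ι} {f : ι → F → ℝ}
    (hf : ∀ k ∈ s, DifferentiableAt ℝ (f k) x) :
    gradient (fun y => ∑ k ∈ s, f k y) x = ∑ k ∈ s, gradient (f k) x := by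
  rw [gradient, fderiv_fun_sum hf, map_sum]
  rfl

end Gradient

theorem stmt_15_general (d : ℕ) (ι : Type) [Fintype ι] [Nonempty ι]
    (ℓ : ι → EuclideanSpace ℝ (Fin d) → ℝ) (L G : ℝ)
    (lH : EuclideanSpace ℝ (Fin d) → ℝ)
    (hlH : lH = fun w => (Fintype.card ι : ℝ)⁻¹ * ∑ k, ℓ k w)
    (hdiff : ∀ k, Differentiable ℝ (ℓ k))
    (hsmooth : ∀ (k : ι) (w w' : EuclideanSpace ℝ (Fin d)),
      ‖gradient (ℓ k) w' - gradient (ℓ k) w‖ ≤ L * ‖w' - w‖)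
    (hhetero : ∀ w' : EuclideanSpace ℝ (Fin d),
      (Fintype.card ι : ℝ)⁻¹ * ∑ k, ‖gradient (ℓ k) w' - gradient lH w'‖ ^ 2 ≤ G ^ 2)
    (γ : ℝ) (H : ℕ)
    (hstep : L ^ 2 * γ ^ 2 * (H : ℝ) * ((H : ℝ) - 1) ≤ 1 / 2)
    (w : EuclideanSpace ℝ (Fin d)) (v : ι → ℕ → EuclideanSpace ℝ (Fin d))
    (hv0 : ∀ k, v k 0 = w)
    (hrec : ∀ (k : ι) (h : ℕ), v k (h + 1) = v k h - γ • gradient (ℓ k) (v k h))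
    (Δ : EuclideanSpace ℝ (Fin d))
    (hΔ : Δ = (Fintype.card ι : ℝ)⁻¹ • ∑ k, (v k H - w)) :
    ‖Δ + ((H : ℝ) * γ) • gradient lH w‖ ^ 2
      ≤ 4 * L ^ 2 * γ ^ 4 * (H : ℝ) ^ 3 * ((H : ℝ) - 1)
          * (G ^ 2 + ‖gradient lH w‖ ^ 2) := by
  set c := (Fintype.card ι : ℝ)
  set K := 2 * L ^ 2 * γ ^ 4 * (H : ℝ) ^ 3 * ((H : ℝ) - 1)
  have hK : 0 ≤ K := by
    have hK' : K = 2 * L ^ 2 * γ ^ 4 * (H : ℝ) ^ 2 * ((H : ℝ) * ((H : ℝ) - 1)) := by ring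
    rw [hK']
    exact mul_nonneg (by positivity) (natCast_mul_natCast_sub_one_nonneg H)
  have hgH : gradient lH w = c⁻¹ • ∑ k, gradient (ℓ k) w := by
    rw [hlH, gradient_const_mul (DifferentiableAt.fun_sum fun k _ => (hdiff k).differentiableAt),
      gradient_fun_sum fun k _ => (hdiff k).differentiableAt]
  have hsplit : Δ + ((H : ℝ) * γ) • gradient lH w
      = c⁻¹ • ∑ k, ((v k H - w) + ((H : ℝ) * γ) • gradient (ℓ k) w) := by
    rw [hΔ, hgH, sum_add_distrib, smul_add, ← smul_sum, smul_comm]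
  calc ‖Δ + ((H : ℝ) * γ) • gradient lH w‖ ^ 2
      ≤ c⁻¹ * ∑ k, ‖(v k H - w) + ((H : ℝ) * γ) • gradient (ℓ k) w‖ ^ 2 :=
        hsplit ▸ sq_norm_average_le _
    _ ≤ c⁻¹ * ∑ k, K * ‖gradient (ℓ k) w‖ ^ 2 := by
        gcongr with k
        exact sq_norm_iterate_sub_add_le (hv0 k) (hrec k) (fun u => hsmooth k w u) hstep
    _ = K * (c⁻¹ * ∑ k, ‖gradient (ℓ k) w‖ ^ 2) := by rw [← mul_sum]; ring
    _ = K * (c⁻¹ * ∑ k, ‖gradient (ℓ k) w - gradient lH w‖ ^ 2 + ‖gradient lH w‖ ^ 2) := by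
        rw [hgH, average_sq_norm_eq]
    _ ≤ K * (G ^ 2 + ‖gradient lH w‖ ^ 2) := by grw [hhetero w]
    _ ≤ 2 * K * (G ^ 2 + ‖gradient lH w‖ ^ 2) := by
        linarith [mul_nonneg hK (by positivity : 0 ≤ G ^ 2 + ‖gradient lH w‖ ^ 2)]
    _ = _ := by ring

/-- Lemma (bias of the averaged local update): with the same setup as the drift lemma,
the average update `Δ = (1/|𝓗|) ∑_k (v_{k,H} - w)` satisfies
`‖Δ + Hγ∇ℓ_𝓗(w)‖² ≤ 4L²γ⁴H³(H-1)(G² + ‖∇ℓ_𝓗(w)‖²)`. -/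
theorem stmt_15 (d : ℕ) (hd : 1 ≤ d) (ι : Type) [Fintype ι] [Nonempty ι]
    (ℓ : ι → EuclideanSpace ℝ (Fin d) → ℝ) (L G : ℝ) (hL : 0 < L)
    (lH : EuclideanSpace ℝ (Fin d) → ℝ)
    (hlH : lH = fun w => (Fintype.card ι : ℝ)⁻¹ * ∑ k, ℓ k w)
    (hdiff : ∀ k, Differentiable ℝ (ℓ k))
    (hsmooth : ∀ (k : ι) (w w' : EuclideanSpace ℝ (Fin d)),
      ‖gradient (ℓ k) w' - gradient (ℓ k) w‖ ≤ L * ‖w' - w‖)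
    (hhetero : ∀ w' : EuclideanSpace ℝ (Fin d),
      (Fintype.card ι : ℝ)⁻¹ * ∑ k, ‖gradient (ℓ k) w' - gradient lH w'‖ ^ 2 ≤ G ^ 2)
    (γ : ℝ) (hγ : 0 < γ) (H : ℕ) (hH : 1 ≤ H)
    (hstep : L ^ 2 * γ ^ 2 * (H : ℝ) * ((H : ℝ) - 1) ≤ 1 / 2)
    (w : EuclideanSpace ℝ (Fin d)) (v : ι → ℕ → EuclideanSpace ℝ (Fin d))
    (hv0 : ∀ k, v k 0 = w)
    (hrec : ∀ (k : ι) (h : ℕ), v k (h + 1) = v k h - γ • gradient (ℓ k) (v k h))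
    (Δ : EuclideanSpace ℝ (Fin d))
    (hΔ : Δ = (Fintype.card ι : ℝ)⁻¹ • ∑ k, (v k H - w)) :
    ‖Δ + ((H : ℝ) * γ) • gradient lH w‖ ^ 2
      ≤ 4 * L ^ 2 * γ ^ 4 * (H : ℝ) ^ 3 * ((H : ℝ) - 1)
          * (G ^ 2 + ‖gradient lH w‖ ^ 2) :=
  stmt_15_general d ι ℓ L G lH hlH hdiff hsmooth hhetero γ H hstep w v hv0 hrec Δ hΔ
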